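/- Let ν ∈ [1/2, ∞), R > 0, let Ω ⊆ ℝ² be a domain and w ∈ ∂Ω, and suppose Ω ∩ B(w,R) is contained in a planar sector with apex w and aperture angle π/ν (that is, in the image of S_ν under a rigid motion of ℝ² taking the origin to w). Let M ≥ 0 and suppose u is C² on Ω with Δu ≥ 0 pointwise on Ω, u ≤ M on Ω ∩ B(w,R), and limsup_{x→y, x∈Ω} u(x) ≤ 0 for every y ∈ ∂Ω ∩ B(w,R). Then there exists a constant c = c(ν) ≥ 1, independent of Ω, w, R, M and u, such that u(x) ≤ c · M · (|x−w|/R)^ν for all x ∈ Ω ∩ B(w,R). -/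

import Mathlib

open Real Set Filter Topology

/-- The planar sector `S_ν` of aperture `π/ν` with apex at the origin. -/
def Sector (ν : ℝ) : Set (ℝ × ℝ) :=
  {x | ∃ r φ : ℝ, 0 < r ∧ |φ| < π / (2*ν) ∧ x = (r * Real.cos φ, r * Real.sin φ)}

/-- First partial derivative of `u : ℝ × ℝ → ℝ`. -/
noncomputable def pdx (u : ℝ × ℝ → ℝ) (x : ℝ × ℝ) : ℝ := fderiv ℝ u x ((1 : ℝ), (0 : ℝ))

/-- Second partial derivative of `u : ℝ × ℝ → ℝ`. -/
noncomputable def pdy (u : ℝ × ℝ → ℝ) (x : ℝ × ℝ) : ℝ := fderiv ℝ u x ((0 : ℝ), (1 : ℝ))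

/-- The Laplacian `Δu`. -/
noncomputable def lap2 (u : ℝ × ℝ → ℝ) (x : ℝ × ℝ) : ℝ := pdx (pdx u) x + pdy (pdy u) x

/-- `|∇u|²`. -/
noncomputable def gradSq (u : ℝ × ℝ → ℝ) (x : ℝ × ℝ) : ℝ := (pdx u x)^2 + (pdy u x)^2

/-- `⟨∇u, D²u · ∇u⟩`. -/
noncomputable def hessQ (u : ℝ × ℝ → ℝ) (x : ℝ × ℝ) : ℝ :=
  (pdx u x)^2 * pdx (pdx u) x + 2 * pdx u x * pdy u x * pdx (pdy u) x
    + (pdy u x)^2 * pdy (pdy u) x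

/-- `u` satisfies the `p`-Laplace equation pointwise at `x`:
`|∇u(x)|² Δu(x) + (p-2) ⟨∇u(x), D²u(x) ∇u(x)⟩ = 0`. -/
def PLaplaceAt (p : ℝ) (u : ℝ × ℝ → ℝ) (x : ℝ × ℝ) : Prop :=
  gradSq u x * lap2 u x + (p - 2) * hessQ u x = 0

/-- The open Euclidean ball `B(w,R)` in `ℝ × ℝ`. -/
def eballAt (w : ℝ × ℝ) (R : ℝ) : Set (ℝ × ℝ) :=
  {x | (x.1 - w.1)^2 + (x.2 - w.2)^2 < R^2}

/-- The image of a point under the rigid motion consisting of rotation by angle `α`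
followed by translation taking the origin to `w`. -/
noncomputable def rigidMotion (w : ℝ × ℝ) (α : ℝ) (z : ℝ × ℝ) : ℝ × ℝ :=
  (w.1 + Real.cos α * z.1 - Real.sin α * z.2, w.2 + Real.sin α * z.1 + Real.cos α * z.2)

/-- directional second derivative test -/
lemma dir_second_deriv_nonpos (h : ℝ × ℝ → ℝ) (y : ℝ × ℝ) (e : ℝ × ℝ)
    (hc : ContDiffAt ℝ 2 h y) (hmax : IsLocalMax h y) :
    fderiv ℝ (fun x => fderiv ℝ h x e) y e ≤ 0 := by
  -- get an open set V ∋ y where h is C²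
  obtain ⟨U0, hU0, hCU0⟩ := hc.contDiffOn (m := 2) le_rfl (by norm_num)
  set V : Set (ℝ × ℝ) := interior U0 with hV
  have hVo : IsOpen V := isOpen_interior
  have hyV : y ∈ V := mem_interior_iff_mem_nhds.2 hU0
  have hC : ContDiffOn ℝ 2 h V := hCU0.mono interior_subset
  have hVy : V ∈ 𝓝 y := hVo.mem_nhds hyV
  -- h differentiable on V
  have hdiff : DifferentiableOn ℝ h V := hC.differentiableOn (by norm_num)
  -- g := x ↦ fderiv h x e is differentiable on V
  have hfd : ContDiffOn ℝ 1 (fderiv ℝ h) V := hC.fderiv_of_isOpen hVo (by norm_num)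
  set g : ℝ × ℝ → ℝ := fun x => fderiv ℝ h x e with hg
  have hgd : DifferentiableOn ℝ g V := by
    have : DifferentiableOn ℝ (fderiv ℝ h) V := hfd.differentiableOn one_ne_zero
    exact fun x hx => ((ContinuousLinearMap.apply ℝ ℝ e).differentiableAt.comp_differentiableWithinAt x (this x hx))
  set L : ℝ := fderiv ℝ g y e with hL
  by_contra hLpos
  push_neg at hLpos
  -- the line map
  set ℓ : ℝ → ℝ × ℝ := fun t => y + t • e with hℓ
  have hℓd : ∀ t : ℝ, HasDerivAt ℓ e t := fun t => by
    have := ((hasDerivAt_id t).smul_const e).const_add y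
    simp only [one_smul] at this
    exact this
  have hℓc : Continuous ℓ := by continuity
  have hℓ0 : ℓ 0 = y := by simp [hℓ]
  -- f and f'
  set f : ℝ → ℝ := fun t => h (ℓ t) with hf
  set f' : ℝ → ℝ := fun t => g (ℓ t) with hf'
  have hTmem : ℓ ⁻¹' V ∈ 𝓝 (0:ℝ) := by
    have := hℓc.continuousAt (x := (0:ℝ))
    exact hℓc.continuousAt.preimage_mem_nhds (by rw [hℓ0]; exact hVy)
  have hfD : ∀ t, ℓ t ∈ V → HasDerivAt f (f' t) t := by
    intro t ht
    have hh : HasFDerivAt h (fderiv ℝ h (ℓ t)) (ℓ t) :=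
      (hdiff.differentiableAt (hVo.mem_nhds ht)).hasFDerivAt
    exact hh.comp_hasDerivAt t (hℓd t)
  -- f' has derivative L at 0
  have hgdy : HasFDerivAt g (fderiv ℝ g y) y :=
    (hgd.differentiableAt (hVo.mem_nhds hyV)).hasFDerivAt
  have hf'D : HasDerivAt f' L 0 := by
    rw [← hℓ0] at hgdy
    have := hgdy.comp_hasDerivAt 0 (hℓd 0)
    simp only [hℓ0] at this
    exact this
  -- f' 0 = 0
  have hf'0 : f' 0 = 0 := by
    have : fderiv ℝ h y = 0 := hmax.fderiv_eq_zero
    simp [hf', hg, hℓ0, this]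
  -- slope of f' tends to L > 0, so f' > 0 on a right interval
  have hslope : Tendsto (slope f' 0) (𝓝[≠] (0:ℝ)) (𝓝 L) :=
    hasDerivAt_iff_tendsto_slope.mp hf'D
  have hev : ∀ᶠ t in 𝓝[≠] (0:ℝ), 0 < slope f' 0 t := hslope.eventually (eventually_gt_nhds hLpos)
  -- local max pulled back to the line
  have hℓt : Tendsto ℓ (𝓝 (0:ℝ)) (𝓝 y) := by
    have := hℓc.continuousAt (x := (0:ℝ))
    unfold ContinuousAt at this
    rwa [hℓ0] at this
  have hevf : ∀ᶠ t in 𝓝 (0:ℝ), f t ≤ f 0 := by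
    have : ∀ᶠ x in 𝓝 y, h x ≤ h y := hmax
    have h2 := hℓt.eventually this
    simpa [hf, hℓ0] using h2
  have hev' : ∀ᶠ t in 𝓝 (0:ℝ), t ≠ 0 → 0 < slope f' 0 t := by
    rw [eventually_nhdsWithin_iff] at hev
    filter_upwards [hev] with t ht hne
    exact ht (by simpa using hne)
  have hall : ∀ᶠ t in 𝓝 (0:ℝ), (ℓ t ∈ V ∧ f t ≤ f 0) ∧ (t ≠ 0 → 0 < slope f' 0 t) := by
    filter_upwards [hTmem, hevf, hev'] with t h1 h2 h3
    exact ⟨⟨h1, h2⟩, h3⟩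
  obtain ⟨δ, hδ, hδall⟩ := Metric.eventually_nhds_iff.mp hall
  have hIcc : Icc (0:ℝ) (δ/2) ⊆ {t | ℓ t ∈ V ∧ f t ≤ f 0} := by
    intro t ht
    have : dist t 0 < δ := by
      rw [Real.dist_eq, sub_zero, abs_of_nonneg ht.1]
      linarith [ht.2]
    exact (hδall this).1
  have hmono : StrictMonoOn f (Icc (0:ℝ) (δ/2)) := by
    apply strictMonoOn_of_deriv_pos (convex_Icc _ _)
    · intro t ht
      exact ((hfD t (hIcc ht).1).differentiableAt).continuousAt.continuousWithinAt
    · intro t ht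
      rw [interior_Icc] at ht
      have htV : ℓ t ∈ V := (hIcc ⟨le_of_lt ht.1, le_of_lt ht.2⟩).1
      have hd := (hfD t htV).deriv
      rw [hd]
      have htd : dist t 0 < δ := by
        rw [Real.dist_eq, sub_zero, abs_of_nonneg (le_of_lt ht.1)]
        linarith [ht.2]
      have hs := (hδall htd).2 (ne_of_gt ht.1)
      rw [slope_def_field] at hs
      have : (f' t - f' 0) / (t - 0) = f' t / t := by rw [hf'0, sub_zero, sub_zero]
      rw [this] at hs
      exact (div_pos_iff.mp hs).elim (fun h => h.1) (fun h => absurd h.2 (not_lt.2 (le_of_lt ht.1)))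
  have h1 : f 0 < f (δ/2) := hmono (left_mem_Icc.2 (by linarith)) (right_mem_Icc.2 (by linarith)) (by linarith)
  have h2 : f (δ/2) ≤ f 0 := (hIcc (right_mem_Icc.2 (by linarith))).2
  linarith

lemma lap2_nonpos_of_isLocalMax (h : ℝ × ℝ → ℝ) (y : ℝ × ℝ)
    (hc : ContDiffAt ℝ 2 h y) (hmax : IsLocalMax h y) : lap2 h y ≤ 0 := by
  have h1 := dir_second_deriv_nonpos h y ((1:ℝ),(0:ℝ)) hc hmax
  have h2 := dir_second_deriv_nonpos h y ((0:ℝ),(1:ℝ)) hc hmax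
  unfold lap2
  have e1 : pdx (pdx h) y = fderiv ℝ (fun x => fderiv ℝ h x ((1:ℝ),(0:ℝ))) y ((1:ℝ),(0:ℝ)) := rfl
  have e2 : pdy (pdy h) y = fderiv ℝ (fun x => fderiv ℝ h x ((0:ℝ),(1:ℝ))) y ((0:ℝ),(1:ℝ)) := rfl
  rw [e1, e2]
  linarith

/-- Strict maximum principle. -/
lemma maxPrinciple_strict (U : Set (ℝ × ℝ)) (hUo : IsOpen U)
    (hUb : Bornology.IsBounded U) (h : ℝ × ℝ → ℝ) (hsm : ContDiffOn ℝ 2 h U)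
    (hsub : ∀ x ∈ U, 0 < lap2 h x) (hbdd : BddAbove (h '' U)) (b : ℝ)
    (hbound : ∀ y ∈ frontier U, ∀ ε : ℝ, 0 < ε → ∀ᶠ x in nhdsWithin y U, h x ≤ b + ε) :
    ∀ x ∈ U, h x ≤ b := by
  intro x₀ hx₀
  have hne : (h '' U).Nonempty := ⟨h x₀, mem_image_of_mem h hx₀⟩
  set s : ℝ := sSup (h '' U) with hs
  have hle : ∀ x ∈ U, h x ≤ s := fun x hx => le_csSup hbdd (mem_image_of_mem h hx)
  suffices hsb : s ≤ b from le_trans (hle x₀ hx₀) hsb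
  -- a maximizing sequence
  have hseq : ∀ n : ℕ, ∃ x ∈ U, s - 1/(n+1) < h x := by
    intro n
    have : s - 1/(n+1) < s := by
      have : (0:ℝ) < 1/(n+1) := by positivity
      linarith
    obtain ⟨z, hz, hzs⟩ := exists_lt_of_lt_csSup hne this
    obtain ⟨x, hx, rfl⟩ := hz
    exact ⟨x, hx, hzs⟩
  choose xs hxsU hxs using hseq
  obtain ⟨y, hyc, φ, hφ, hφt⟩ := tendsto_subseq_of_bounded hUb hxsU
  -- h (xs (φ n)) → s
  have hto : Tendsto (fun n => h (xs (φ n))) atTop (𝓝 s) := by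
    have hlow : Tendsto (fun n => s - 1/((φ n : ℝ)+1)) atTop (𝓝 s) := by
      have h1 : Tendsto (fun n => ((φ n : ℝ)+1)) atTop atTop := by
        apply tendsto_atTop_add_const_right
        exact tendsto_natCast_atTop_atTop.comp hφ.tendsto_atTop
      have := h1.inv_tendsto_atTop
      have h2 : Tendsto (fun n => s - ((φ n : ℝ)+1)⁻¹) atTop (𝓝 (s - 0)) :=
        (tendsto_const_nhds).sub this
      simpa [one_div] using h2
    apply tendsto_of_tendsto_of_tendsto_of_le_of_le hlow tendsto_const_nhds
    · intro n; exact le_of_lt (hxs (φ n))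
    · intro n; exact hle _ (hxsU (φ n))
  by_cases hyU : y ∈ U
  · -- interior: contradiction
    exfalso
    have hcy : ContinuousAt h y :=
      (hsm.continuousOn.continuousWithinAt (hyU)).continuousAt (hUo.mem_nhds hyU)
    have : Tendsto (fun n => h (xs (φ n))) atTop (𝓝 (h y)) := hcy.tendsto.comp hφt
    have hhy : h y = s := tendsto_nhds_unique this hto
    have hmax : IsLocalMax h y := by
      filter_upwards [hUo.mem_nhds hyU] with z hz
      rw [hhy]; exact hle z hz
    have hca : ContDiffAt ℝ 2 h y := (hsm.contDiffAt (hUo.mem_nhds hyU))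
    have := lap2_nonpos_of_isLocalMax h y hca hmax
    linarith [hsub y hyU]
  · -- boundary
    have hyf : y ∈ frontier U := by
      rw [frontier_eq_closure_inter_closure]
      constructor
      · exact closure_mono (fun z hz => hz) hyc
      · exact subset_closure hyU
    have : ∀ ε : ℝ, 0 < ε → s ≤ b + ε := by
      intro ε hε
      have hev := hbound y hyf ε hε
      have htn : Tendsto (fun n => xs (φ n)) atTop (nhdsWithin y U) := by
        rw [tendsto_nhdsWithin_iff]
        exact ⟨hφt, Eventually.of_forall (fun n => hxsU (φ n))⟩
      have := htn.eventually hev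
      exact le_of_tendsto hto this
    by_contra hsbb
    push_neg at hsbb
    have := this ((s - b)/2) (by linarith)
    linarith

lemma q_hasFDerivAt (x : ℝ × ℝ) :
    HasFDerivAt (fun z : ℝ × ℝ => z.1^2 + z.2^2)
      ((2*x.1) • (ContinuousLinearMap.fst ℝ ℝ ℝ) + (2*x.2) • (ContinuousLinearMap.snd ℝ ℝ ℝ)) x := by
  have h1 : HasFDerivAt (fun z : ℝ × ℝ => z.1) (ContinuousLinearMap.fst ℝ ℝ ℝ) x := hasFDerivAt_fst
  have h2 : HasFDerivAt (fun z : ℝ × ℝ => z.2) (ContinuousLinearMap.snd ℝ ℝ ℝ) x := hasFDerivAt_snd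
  have := (h1.mul h1).add (h2.mul h2)
  have e : (fun z : ℝ × ℝ => z.1^2 + z.2^2)
      = ((fun z : ℝ × ℝ => z.1) * fun z => z.1) + (fun z : ℝ × ℝ => z.2) * fun z => z.2 := by
    funext z; simp only [Pi.add_apply, Pi.mul_apply]; ring
  rw [e]
  refine this.congr_fderiv ?_
  ext v <;> simp <;> ring

lemma fderiv_app_diffOn (U : Set (ℝ × ℝ)) (hUo : IsOpen U) (h : ℝ × ℝ → ℝ)
    (hsm : ContDiffOn ℝ 2 h U) (e : ℝ × ℝ) :
    DifferentiableOn ℝ (fun x => fderiv ℝ h x e) U := by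
  have hfd : ContDiffOn ℝ 1 (fderiv ℝ h) U := hsm.fderiv_of_isOpen hUo (by norm_num)
  have : DifferentiableOn ℝ (fderiv ℝ h) U := hfd.differentiableOn one_ne_zero
  exact fun x hx => ((ContinuousLinearMap.apply ℝ ℝ e).differentiableAt.comp_differentiableWithinAt x (this x hx))

/-- Maximum principle. -/
lemma maxPrinciple (U : Set (ℝ × ℝ)) (hUo : IsOpen U)
    (hUb : Bornology.IsBounded U) (h : ℝ × ℝ → ℝ) (hsm : ContDiffOn ℝ 2 h U)
    (hsub : ∀ x ∈ U, 0 ≤ lap2 h x) (hbdd : BddAbove (h '' U)) (b : ℝ)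
    (hbound : ∀ y ∈ frontier U, ∀ ε : ℝ, 0 < ε → ∀ᶠ x in nhdsWithin y U, h x ≤ b + ε) :
    ∀ x ∈ U, h x ≤ b := by
  set q : ℝ × ℝ → ℝ := fun z => z.1^2 + z.2^2 with hqdef
  have hq0 : ∀ z, 0 ≤ q z := fun z => by positivity
  -- bound for q on U
  obtain ⟨r, hr⟩ := (Metric.isBounded_iff_subset_closedBall 0).mp hUb
  set C : ℝ := 2 * (max r 0)^2 with hC
  have hC0 : 0 ≤ C := by positivity
  have hqC : ∀ x ∈ U, q x ≤ C := by
    intro x hx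
    have := hr hx
    rw [Metric.mem_closedBall, dist_zero_right, Prod.norm_def] at this
    have h1 : ‖x.1‖ ≤ max r 0 := le_trans (le_trans (le_max_left _ _) this) (le_max_left _ _)
    have h2 : ‖x.2‖ ≤ max r 0 := le_trans (le_trans (le_max_right _ _) this) (le_max_left _ _)
    rw [Real.norm_eq_abs] at h1 h2
    have g1 : x.1^2 ≤ (max r 0)^2 := by nlinarith [sq_abs x.1, abs_nonneg x.1]
    have g2 : x.2^2 ≤ (max r 0)^2 := by nlinarith [sq_abs x.2, abs_nonneg x.2]
    simp only [hqdef, hC]; linarith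
  have hqc : ContDiff ℝ 2 q := (contDiff_fst.pow 2).add (contDiff_snd.pow 2)
  -- main estimate for each δ > 0
  have key : ∀ δ : ℝ, 0 < δ → ∀ x ∈ U, h x ≤ b + δ * C := by
    intro δ hδ
    set h₂ : ℝ × ℝ → ℝ := fun z => h z + δ * q z with hh₂
    have hsm₂ : ContDiffOn ℝ 2 h₂ U := hsm.add ((hqc.const_smul δ).contDiffOn)
    -- pdx h₂ on U
    have hpdx : ∀ z ∈ U, pdx h₂ z = pdx h z + δ * (2 * z.1) := by
      intro z hz
      have hhd : DifferentiableAt ℝ h z :=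
        (hsm.differentiableOn (by norm_num)).differentiableAt (hUo.mem_nhds hz)
      have hqd : DifferentiableAt ℝ q z := (hqc.differentiable (by norm_num)).differentiableAt
      have : fderiv ℝ h₂ z = fderiv ℝ h z + δ • fderiv ℝ q z := by
        rw [hh₂]
        rw [fderiv_fun_add hhd (hqd.const_mul δ)]
        congr 1
        exact fderiv_const_mul hqd δ
      unfold pdx
      rw [this, (q_hasFDerivAt z).fderiv]
      simp
    have hpdy : ∀ z ∈ U, pdy h₂ z = pdy h z + δ * (2 * z.2) := by
      intro z hz
      have hhd : DifferentiableAt ℝ h z :=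
        (hsm.differentiableOn (by norm_num)).differentiableAt (hUo.mem_nhds hz)
      have hqd : DifferentiableAt ℝ q z := (hqc.differentiable (by norm_num)).differentiableAt
      have : fderiv ℝ h₂ z = fderiv ℝ h z + δ • fderiv ℝ q z := by
        rw [hh₂, fderiv_fun_add hhd (hqd.const_mul δ)]
        congr 1
        exact fderiv_const_mul hqd δ
      unfold pdy
      rw [this, (q_hasFDerivAt z).fderiv]
      simp
    have hlap : ∀ x ∈ U, lap2 h₂ x = lap2 h x + 4 * δ := by
      intro x hx
      have hev1 : (pdx h₂) =ᶠ[𝓝 x] (fun z => pdx h z + δ * (2 * z.1)) := by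
        filter_upwards [hUo.mem_nhds hx] with z hz
        exact hpdx z hz
      have hev2 : (pdy h₂) =ᶠ[𝓝 x] (fun z => pdy h z + δ * (2 * z.2)) := by
        filter_upwards [hUo.mem_nhds hx] with z hz
        exact hpdy z hz
      have hdx : DifferentiableAt ℝ (pdx h) x :=
        ((fderiv_app_diffOn U hUo h hsm ((1:ℝ),(0:ℝ))) x hx).differentiableAt (hUo.mem_nhds hx)
      have hdy : DifferentiableAt ℝ (pdy h) x :=
        ((fderiv_app_diffOn U hUo h hsm ((0:ℝ),(1:ℝ))) x hx).differentiableAt (hUo.mem_nhds hx)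
      have hlin1 : DifferentiableAt ℝ (fun z : ℝ × ℝ => δ * (2 * z.1)) x := by fun_prop
      have hlin2 : DifferentiableAt ℝ (fun z : ℝ × ℝ => δ * (2 * z.2)) x := by fun_prop
      have c1 : pdx (pdx h₂) x = pdx (pdx h) x + 2 * δ := by
        have e : pdx (pdx h₂) x = fderiv ℝ (pdx h₂) x ((1:ℝ),(0:ℝ)) := rfl
        rw [e, hev1.fderiv_eq]
        rw [fderiv_fun_add hdx hlin1]
        have : fderiv ℝ (fun z : ℝ × ℝ => δ * (2 * z.1)) x ((1:ℝ),(0:ℝ)) = 2 * δ := by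
          have hD : HasFDerivAt (fun z : ℝ × ℝ => δ * (2 * z.1))
              ((δ * 2) • (ContinuousLinearMap.fst ℝ ℝ ℝ)) x := by
            have : HasFDerivAt (fun z : ℝ × ℝ => z.1) (ContinuousLinearMap.fst ℝ ℝ ℝ) x :=
              hasFDerivAt_fst
            have := this.const_smul (δ * 2)
            have e2 : (fun z : ℝ × ℝ => δ * (2 * z.1)) = (δ * 2) • fun z : ℝ × ℝ => z.1 := by
              funext z; simp only [Pi.smul_apply, smul_eq_mul]; ring
            rw [e2]
            exact this
          rw [hD.fderiv]; simp; ring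
        simp only [ContinuousLinearMap.add_apply]
        rw [this]
        rfl
      have c2 : pdy (pdy h₂) x = pdy (pdy h) x + 2 * δ := by
        have e : pdy (pdy h₂) x = fderiv ℝ (pdy h₂) x ((0:ℝ),(1:ℝ)) := rfl
        rw [e, hev2.fderiv_eq]
        rw [fderiv_fun_add hdy hlin2]
        have : fderiv ℝ (fun z : ℝ × ℝ => δ * (2 * z.2)) x ((0:ℝ),(1:ℝ)) = 2 * δ := by
          have hD : HasFDerivAt (fun z : ℝ × ℝ => δ * (2 * z.2))
              ((δ * 2) • (ContinuousLinearMap.snd ℝ ℝ ℝ)) x := by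
            have : HasFDerivAt (fun z : ℝ × ℝ => z.2) (ContinuousLinearMap.snd ℝ ℝ ℝ) x :=
              hasFDerivAt_snd
            have := this.const_smul (δ * 2)
            have e2 : (fun z : ℝ × ℝ => δ * (2 * z.2)) = (δ * 2) • fun z : ℝ × ℝ => z.2 := by
              funext z; simp only [Pi.smul_apply, smul_eq_mul]; ring
            rw [e2]
            exact this
          rw [hD.fderiv]; simp; ring
        simp only [ContinuousLinearMap.add_apply]
        rw [this]
        rfl
      show pdx (pdx h₂) x + pdy (pdy h₂) x = pdx (pdx h) x + pdy (pdy h) x + 4 * δ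
      rw [c1, c2]; ring
    -- boundedness above of h₂
    obtain ⟨B, hB⟩ := hbdd
    have hbdd₂ : BddAbove (h₂ '' U) := by
      refine ⟨B + δ * C, ?_⟩
      rintro z ⟨x, hx, rfl⟩
      have h1 : h x ≤ B := hB (mem_image_of_mem h hx)
      have h2 : q x ≤ C := hqC x hx
      simp only [hh₂]
      nlinarith
    -- boundary condition for h₂
    have hbound₂ : ∀ y ∈ frontier U, ∀ ε : ℝ, 0 < ε →
        ∀ᶠ x in nhdsWithin y U, h₂ x ≤ (b + δ * C) + ε := by
      intro y hy ε hε
      filter_upwards [hbound y hy ε hε, self_mem_nhdsWithin] with x hx hxU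
      have := hqC x hxU
      simp only [hh₂]
      nlinarith
    have := maxPrinciple_strict U hUo hUb h₂ hsm₂
      (fun x hx => by rw [hlap x hx]; linarith [hsub x hx]) hbdd₂ (b + δ * C) hbound₂
    intro x hx
    have h2 := this x hx
    have h3 := hq0 x
    simp only [hh₂] at h2
    nlinarith
  -- let δ → 0
  intro x hx
  by_contra hcon
  push_neg at hcon
  rcases eq_or_lt_of_le hC0 with hC0' | hC0'
  · have := key 1 one_pos x hx
    rw [← hC0'] at this
    linarith
  · have hpos : (0:ℝ) < (h x - b) / (2 * C) := by
      apply div_pos (by linarith) (by linarith)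
    have hk := key ((h x - b) / (2 * C)) hpos x hx
    have e : (h x - b) / (2 * C) * C = (h x - b) / 2 := by
      field_simp
    rw [e] at hk
    linarith


noncomputable def reComp (H : ℂ → ℂ) : ℝ × ℝ → ℝ :=
  fun z => (H (z.1 + z.2 * Complex.I)).re

noncomputable def iotaCLM : ℝ × ℝ →L[ℝ] ℂ :=
  (Complex.equivRealProdCLM.symm : (ℝ × ℝ) ≃L[ℝ] ℂ)

lemma iotaCLM_apply (p : ℝ × ℝ) : iotaCLM p = p.1 + p.2 * Complex.I := by
  have := Complex.equivRealProdCLM_symm_apply p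
  exact this

lemma hasFDerivAt_reComp (H : ℂ → ℂ) (d : ℂ) (x : ℝ × ℝ)
    (hH : HasDerivAt H d (x.1 + x.2 * Complex.I)) :
    HasFDerivAt (reComp H)
      (Complex.reCLM.comp ((((1 : ℂ →L[ℂ] ℂ).smulRight d).restrictScalars ℝ).comp iotaCLM)) x := by
  have h1 : HasFDerivAt iotaCLM iotaCLM x := iotaCLM.hasFDerivAt
  have h2 : HasFDerivAt H (((1 : ℂ →L[ℂ] ℂ).smulRight d).restrictScalars ℝ) (iotaCLM x) := by
    rw [iotaCLM_apply]
    exact hH.hasFDerivAt.restrictScalars ℝ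
  have h3 := h2.comp x h1
  have h4 := (Complex.reCLM.hasFDerivAt (x := H (iotaCLM x))).comp x h3
  have he : reComp H = fun z => Complex.reCLM (H (iotaCLM z)) := by
    funext z; simp [reComp, iotaCLM_apply]
  rw [he]
  exact h4

lemma pdx_reComp (H : ℂ → ℂ) (d : ℂ) (x : ℝ × ℝ)
    (hH : HasDerivAt H d (x.1 + x.2 * Complex.I)) :
    pdx (reComp H) x = d.re := by
  rw [pdx, (hasFDerivAt_reComp H d x hH).fderiv]
  simp [iotaCLM_apply]

lemma pdy_reComp (H : ℂ → ℂ) (d : ℂ) (x : ℝ × ℝ)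
    (hH : HasDerivAt H d (x.1 + x.2 * Complex.I)) :
    pdy (reComp H) x = (Complex.I * d).re := by
  rw [pdy, (hasFDerivAt_reComp H d x hH).fderiv]
  simp [iotaCLM_apply]

lemma reComp_contDiffOn (H : ℂ → ℂ) (W : Set ℂ) (hW : IsOpen W)
    (hH : DifferentiableOn ℂ H W) :
    ContDiffOn ℝ 2 (reComp H) {z : ℝ × ℝ | (z.1 + z.2 * Complex.I : ℂ) ∈ W} := by
  have hAn := hH.analyticOnNhd hW
  have hCC : ContDiffOn ℂ 2 H W := hAn.contDiffOn_of_completeSpace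
  have hR : ContDiffOn ℝ 2 H W := hCC.restrict_scalars ℝ
  have hι : ContDiff ℝ 2 (fun z : ℝ × ℝ => (z.1 + z.2 * Complex.I : ℂ)) := by
    have := iotaCLM.contDiff (n := 2)
    have he : (fun z : ℝ × ℝ => (z.1 + z.2 * Complex.I : ℂ)) = iotaCLM := by
      funext z; rw [iotaCLM_apply]
    rw [he]; exact this
  have hcomp : ContDiffOn ℝ 2 (fun z : ℝ × ℝ => H (z.1 + z.2 * Complex.I))
      {z : ℝ × ℝ | (z.1 + z.2 * Complex.I : ℂ) ∈ W} :=
    hR.comp hι.contDiffOn (fun z hz => hz)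
  exact Complex.reCLM.contDiff.comp_contDiffOn hcomp

lemma lap2_reComp_eq_zero (H : ℂ → ℂ) (W : Set ℂ) (hW : IsOpen W)
    (hH : DifferentiableOn ℂ H W) (x : ℝ × ℝ)
    (hx : (x.1 + x.2 * Complex.I : ℂ) ∈ W) :
    lap2 (reComp H) x = 0 := by
  have hAn := hH.analyticOnNhd hW
  have hAn' : AnalyticOnNhd ℂ (deriv H) W := hAn.deriv
  have hW'o : IsOpen {z : ℝ × ℝ | (z.1 + z.2 * Complex.I : ℂ) ∈ W} := by
    have : Continuous (fun z : ℝ × ℝ => (z.1 + z.2 * Complex.I : ℂ)) := by continuity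
    exact hW.preimage this
  have hdH : ∀ z : ℝ × ℝ, (z.1 + z.2 * Complex.I : ℂ) ∈ W →
      HasDerivAt H (deriv H (z.1 + z.2 * Complex.I)) (z.1 + z.2 * Complex.I) :=
    fun z hz => ((hH.differentiableAt (hW.mem_nhds hz))).hasDerivAt
  have hdH' : ∀ z : ℝ × ℝ, (z.1 + z.2 * Complex.I : ℂ) ∈ W →
      HasDerivAt (deriv H) (deriv (deriv H) (z.1 + z.2 * Complex.I)) (z.1 + z.2 * Complex.I) :=
    fun z hz => ((hAn' (z.1 + z.2 * Complex.I) hz).differentiableAt).hasDerivAt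
  set w : ℂ := (x.1 + x.2 * Complex.I : ℂ) with hwdef
  -- pdx part
  have hev1 : pdx (reComp H) =ᶠ[𝓝 x] reComp (deriv H) := by
    filter_upwards [hW'o.mem_nhds hx] with z hz
    exact pdx_reComp H _ z (hdH z hz)
  have c1 : pdx (pdx (reComp H)) x = (deriv (deriv H) w).re := by
    have e : pdx (pdx (reComp H)) x = fderiv ℝ (pdx (reComp H)) x ((1:ℝ),(0:ℝ)) := rfl
    rw [e, hev1.fderiv_eq]
    exact pdx_reComp (deriv H) _ x (hdH' x hx)
  -- pdy part
  have hev2 : pdy (reComp H) =ᶠ[𝓝 x] reComp (fun w => Complex.I * deriv H w) := by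
    filter_upwards [hW'o.mem_nhds hx] with z hz
    rw [pdy_reComp H _ z (hdH z hz)]
    rfl
  have c2 : pdy (pdy (reComp H)) x = (Complex.I * (Complex.I * deriv (deriv H) w)).re := by
    have e : pdy (pdy (reComp H)) x = fderiv ℝ (pdy (reComp H)) x ((0:ℝ),(1:ℝ)) := rfl
    rw [e, hev2.fderiv_eq]
    have hG : HasDerivAt (fun w => Complex.I * deriv H w)
        (Complex.I * deriv (deriv H) w) w := (hdH' x hx).const_mul Complex.I
    exact pdy_reComp _ _ x hG
  show pdx (pdx (reComp H)) x + pdy (pdy (reComp H)) x = 0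
  rw [c1, c2]
  have : Complex.I * (Complex.I * deriv (deriv H) w) = -(deriv (deriv H) w) := by
    rw [← mul_assoc, Complex.I_mul_I]; ring
  rw [this, Complex.neg_re]
  ring

lemma lap2_sub (U : Set (ℝ × ℝ)) (hUo : IsOpen U) (f g : ℝ × ℝ → ℝ)
    (hf : ContDiffOn ℝ 2 f U) (hg : ContDiffOn ℝ 2 g U) (x : ℝ × ℝ) (hx : x ∈ U) :
    lap2 (fun z => f z - g z) x = lap2 f x - lap2 g x := by
  have hfd : ∀ z ∈ U, DifferentiableAt ℝ f z := fun z hz =>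
    (hf.differentiableOn (by norm_num)).differentiableAt (hUo.mem_nhds hz)
  have hgd : ∀ z ∈ U, DifferentiableAt ℝ g z := fun z hz =>
    (hg.differentiableOn (by norm_num)).differentiableAt (hUo.mem_nhds hz)
  have hpdx : ∀ z ∈ U, pdx (fun z => f z - g z) z = pdx f z - pdx g z := by
    intro z hz
    unfold pdx
    rw [fderiv_fun_sub (hfd z hz) (hgd z hz)]
    rfl
  have hpdy : ∀ z ∈ U, pdy (fun z => f z - g z) z = pdy f z - pdy g z := by
    intro z hz
    unfold pdy
    rw [fderiv_fun_sub (hfd z hz) (hgd z hz)]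
    rfl
  have hev1 : pdx (fun z => f z - g z) =ᶠ[𝓝 x] (fun z => pdx f z - pdx g z) := by
    filter_upwards [hUo.mem_nhds hx] with z hz; exact hpdx z hz
  have hev2 : pdy (fun z => f z - g z) =ᶠ[𝓝 x] (fun z => pdy f z - pdy g z) := by
    filter_upwards [hUo.mem_nhds hx] with z hz; exact hpdy z hz
  have hdx1 : DifferentiableAt ℝ (pdx f) x :=
    ((fderiv_app_diffOn U hUo f hf ((1:ℝ),(0:ℝ))) x hx).differentiableAt (hUo.mem_nhds hx)
  have hdx2 : DifferentiableAt ℝ (pdx g) x :=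
    ((fderiv_app_diffOn U hUo g hg ((1:ℝ),(0:ℝ))) x hx).differentiableAt (hUo.mem_nhds hx)
  have hdy1 : DifferentiableAt ℝ (pdy f) x :=
    ((fderiv_app_diffOn U hUo f hf ((0:ℝ),(1:ℝ))) x hx).differentiableAt (hUo.mem_nhds hx)
  have hdy2 : DifferentiableAt ℝ (pdy g) x :=
    ((fderiv_app_diffOn U hUo g hg ((0:ℝ),(1:ℝ))) x hx).differentiableAt (hUo.mem_nhds hx)
  have c1 : pdx (pdx (fun z => f z - g z)) x = pdx (pdx f) x - pdx (pdx g) x := by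
    have e : pdx (pdx (fun z => f z - g z)) x
        = fderiv ℝ (pdx (fun z => f z - g z)) x ((1:ℝ),(0:ℝ)) := rfl
    rw [e, hev1.fderiv_eq, fderiv_fun_sub hdx1 hdx2]
    rfl
  have c2 : pdy (pdy (fun z => f z - g z)) x = pdy (pdy f) x - pdy (pdy g) x := by
    have e : pdy (pdy (fun z => f z - g z)) x
        = fderiv ℝ (pdy (fun z => f z - g z)) x ((0:ℝ),(1:ℝ)) := rfl
    rw [e, hev2.fderiv_eq, fderiv_fun_sub hdy1 hdy2]
    rfl
  show pdx (pdx (fun z => f z - g z)) x + pdy (pdy (fun z => f z - g z)) x = _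
  rw [c1, c2]
  show _ = pdx (pdx f) x + pdy (pdy f) x - (pdx (pdx g) x + pdy (pdy g) x)
  ring

lemma ineq_low (M t cc : ℝ) (hM : 0 ≤ M) (ht0 : 0 < t) (ht1 : t ≤ 1)
    (hcc0 : 0 < cc) (hcc1 : cc ≤ 1) :
    M * t^2 ≤ M * (2*(t*cc) - t^2*(2*cc^2-1)) := by
  have htc : t * cc ≤ 1 := by nlinarith
  nlinarith [mul_nonneg (mul_nonneg hM ht0.le)
    (mul_nonneg hcc0.le (by linarith : (0:ℝ) ≤ 1 - t*cc))]

lemma ineq_high (M t cc : ℝ) (hM : 0 ≤ M) (ht0 : 0 < t) (ht1 : t ≤ 1)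
    (hcc0 : 0 < cc) (hcc1 : cc ≤ 1) :
    M * (2*(t*cc) - t^2*(2*cc^2-1)) ≤ 3 * M * t := by
  have haux : 0 ≤ 3*t - (2*(t*cc) - t^2*(2*cc^2-1)) := by
    nlinarith [sq_nonneg (t*cc), sq_nonneg (1-cc), mul_pos ht0 hcc0]
  nlinarith [mul_nonneg hM haux]

lemma key_point (ν R : ℝ) (hν : 1/2 ≤ ν) (hR : 0 < R) (w : ℝ × ℝ) (α M : ℝ) (hM : 0 ≤ M)
    (x : ℝ × ℝ) (hxball : x ∈ eballAt w R) (hxsec : x ∈ rigidMotion w α '' Sector ν) :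
    Complex.exp (-(α:ℂ) * Complex.I) * ((x.1 + x.2*Complex.I) - ((w.1:ℂ) + w.2*Complex.I)) / R
        ∈ Complex.slitPlane
    ∧ M * ((Real.sqrt ((x.1-w.1)^2+(x.2-w.2)^2)/R) ^ (2*ν))
        ≤ reComp (fun z => (M:ℂ) *
            (2 * (Complex.exp (-(α:ℂ)*Complex.I) * (z - ((w.1:ℂ) + w.2*Complex.I)) / R) ^ (ν:ℂ)
             - (Complex.exp (-(α:ℂ)*Complex.I) * (z - ((w.1:ℂ) + w.2*Complex.I)) / R)
                ^ ((2*ν:ℝ):ℂ))) x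
    ∧ reComp (fun z => (M:ℂ) *
            (2 * (Complex.exp (-(α:ℂ)*Complex.I) * (z - ((w.1:ℂ) + w.2*Complex.I)) / R) ^ (ν:ℂ)
             - (Complex.exp (-(α:ℂ)*Complex.I) * (z - ((w.1:ℂ) + w.2*Complex.I)) / R)
                ^ ((2*ν:ℝ):ℂ))) x
        ≤ 3 * M * ((Real.sqrt ((x.1-w.1)^2+(x.2-w.2)^2)/R) ^ ν) := by
  have hν0 : (0:ℝ) < ν := by linarith
  obtain ⟨p, hp, hpx⟩ := hxsec
  obtain ⟨r, φ, hr, hφ, rfl⟩ := hp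
  -- coordinates
  have hx1 : x.1 - w.1 = Real.cos α * (r*Real.cos φ) - Real.sin α * (r*Real.sin φ) := by
    rw [← hpx]; simp [rigidMotion]; ring
  have hx2 : x.2 - w.2 = Real.sin α * (r*Real.cos φ) + Real.cos α * (r*Real.sin φ) := by
    rw [← hpx]; simp [rigidMotion]; ring
  have hsq : (x.1-w.1)^2 + (x.2-w.2)^2 = r^2 := by
    have e : (x.1-w.1)^2+(x.2-w.2)^2
        = (Real.sin α^2 + Real.cos α^2) * (r^2 * (Real.sin φ^2 + Real.cos φ^2)) := by
      rw [hx1, hx2]; ring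
    rw [Real.sin_sq_add_cos_sq, Real.sin_sq_add_cos_sq] at e
    linarith [e]
  have hsqrt : Real.sqrt ((x.1-w.1)^2+(x.2-w.2)^2) = r := by
    rw [hsq]; exact Real.sqrt_sq hr.le
  have hrR : r < R := by
    have hb : (x.1-w.1)^2+(x.2-w.2)^2 < R^2 := hxball
    rw [hsq] at hb
    nlinarith
  -- the angle bound
  have hφπ : |φ| < π := by
    have h1 : π/(2*ν) ≤ π := by
      rw [div_le_iff₀ (by linarith)]
      nlinarith [Real.pi_pos]
    linarith [hφ]
  have hφ2 : ν * |φ| < π/2 := by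
    have := hφ
    have h2ν : (0:ℝ) < 2*ν := by linarith
    calc ν * |φ| < ν * (π/(2*ν)) := by
          apply mul_lt_mul_of_pos_left this hν0
      _ = π/2 := by field_simp
  set ρ : ℝ := r/R with hρdef
  have hρ0 : 0 < ρ := div_pos hr hR
  have hρ1 : ρ < 1 := (div_lt_one hR).2 hrR
  set ζx : ℂ := Complex.exp (-(α:ℂ) * Complex.I)
      * ((x.1 + x.2*Complex.I) - ((w.1:ℂ) + w.2*Complex.I)) / R with hζdef
  -- compute ζx
  have hzw : ((x.1:ℂ) + x.2*Complex.I) - ((w.1:ℂ) + w.2*Complex.I)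
      = Complex.exp ((α:ℂ)*Complex.I) * ((r:ℂ) * Complex.exp ((φ:ℂ)*Complex.I)) := by
    have h1 : ((x.1:ℂ) + x.2*Complex.I) - ((w.1:ℂ) + w.2*Complex.I)
        = ((x.1 - w.1 : ℝ):ℂ) + ((x.2-w.2:ℝ):ℂ)*Complex.I := by push_cast; ring
    rw [h1, hx1, hx2, Complex.exp_mul_I, Complex.exp_mul_I]
    simp only [← Complex.ofReal_cos, ← Complex.ofReal_sin]
    apply Complex.ext
    · simp [Complex.mul_re, Complex.mul_im]
      try ring
    · simp [Complex.mul_re, Complex.mul_im]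
      try ring
  have hζx : ζx = ((ρ:ℝ):ℂ) * Complex.exp ((φ:ℂ)*Complex.I) := by
    rw [hζdef, hzw, ← mul_assoc, ← Complex.exp_add]
    have : -(α:ℂ)*Complex.I + (α:ℂ)*Complex.I = 0 := by ring
    rw [this, Complex.exp_zero, one_mul]
    rw [hρdef]
    push_cast
    ring
  have habs : ‖ζx‖ = ρ := by
    rw [hζx]
    simp [Complex.norm_exp, abs_of_pos hρ0]
  have hne : ζx ≠ 0 := by
    intro h
    rw [h] at habs
    simp at habs
    linarith [hρ0, habs]
  have harg : ζx.arg = φ := by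
    rw [hζx, Complex.exp_mul_I]
    apply Complex.arg_mul_cos_add_sin_mul_I hρ0
    constructor
    · cases abs_lt.mp hφπ with
      | intro h1 h2 => linarith
    · cases abs_lt.mp hφπ with
      | intro h1 h2 => linarith
  have hlog : Complex.log ζx = (Real.log ρ : ℂ) + (φ:ℂ) * Complex.I := by
    rw [Complex.log, habs, harg]
  -- slit plane membership
  have hslit : ζx ∈ Complex.slitPlane := by
    rw [Complex.mem_slitPlane_iff_arg]
    rw [harg]
    constructor
    · intro h; rw [h, abs_of_pos Real.pi_pos] at hφπ; exact lt_irrefl _ hφπ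
    · exact hne
  -- real part of cpow
  have hcre : ∀ c : ℝ, ((ζx) ^ ((c:ℝ):ℂ)).re = ρ ^ c * Real.cos (c * φ) := by
    intro c
    rw [Complex.cpow_def_of_ne_zero hne, hlog]
    have : ((Real.log ρ : ℂ) + (φ:ℂ) * Complex.I) * ((c:ℝ):ℂ)
        = ((c * Real.log ρ : ℝ) : ℂ) + ((c * φ : ℝ):ℂ) * Complex.I := by
      push_cast; ring
    rw [this, Complex.exp_add, Complex.exp_mul_I, ← Complex.ofReal_exp, ← Complex.ofReal_cos,
      ← Complex.ofReal_sin]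
    rw [Complex.re_ofReal_mul]
    simp only [Complex.add_re, Complex.ofReal_re, Complex.mul_re, Complex.I_re, Complex.I_im,
      Complex.ofReal_im, mul_zero, mul_one, zero_sub, sub_neg_eq_add, zero_mul, add_zero, sub_zero]
    rw [Real.rpow_def_of_pos hρ0]
    ring_nf
    try simp
  -- value of v
  set t : ℝ := ρ ^ ν with htdef
  set cc : ℝ := Real.cos (ν * φ) with hccdef
  have ht0 : 0 < t := Real.rpow_pos_of_pos hρ0 ν
  have ht1 : t ≤ 1 := by
    rw [htdef]
    exact Real.rpow_le_one hρ0.le hρ1.le hν0.le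
  have hcc0 : 0 < cc := by
    rw [hccdef]
    apply Real.cos_pos_of_mem_Ioo
    constructor
    · have : ν * φ ≥ -(ν * |φ|) := by
        have := neg_abs_le φ
        nlinarith [abs_nonneg φ]
      linarith
    · have : ν * φ ≤ ν * |φ| := by
        have := le_abs_self φ
        nlinarith
      linarith
  have hcc1 : cc ≤ 1 := Real.cos_le_one _
  have ht2 : ρ ^ (2*ν) = t^2 := by
    rw [htdef, show (2:ℝ)*ν = ν*2 by ring, Real.rpow_mul hρ0.le]
    rw [show ((2:ℝ) : ℝ) = ((2:ℕ) : ℝ) by norm_num, Real.rpow_natCast]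
  have hvx : reComp (fun z => (M:ℂ) *
            (2 * (Complex.exp (-(α:ℂ)*Complex.I) * (z - ((w.1:ℂ) + w.2*Complex.I)) / R) ^ (ν:ℂ)
             - (Complex.exp (-(α:ℂ)*Complex.I) * (z - ((w.1:ℂ) + w.2*Complex.I)) / R)
                ^ ((2*ν:ℝ):ℂ))) x
      = M * (2 * (t * cc) - t^2 * (2*cc^2 - 1)) := by
    rw [reComp]
    have e1 : (Complex.exp (-(α:ℂ)*Complex.I)
        * (((x.1:ℂ) + x.2*Complex.I) - ((w.1:ℂ) + w.2*Complex.I)) / R) = ζx := by rw [hζdef]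
    rw [e1]
    rw [Complex.mul_re]
    simp only [Complex.ofReal_re, Complex.ofReal_im, zero_mul, sub_zero]
    rw [Complex.sub_re, Complex.mul_re]
    simp only [Complex.re_ofNat, Complex.im_ofNat, zero_mul, sub_zero]
    rw [hcre ν, hcre (2*ν)]
    rw [ht2]
    have hcos2 : Real.cos (2*ν*φ) = 2 * cc^2 - 1 := by
      rw [show (2:ℝ)*ν*φ = 2*(ν*φ) by ring, Real.cos_two_mul, hccdef]
    rw [hcos2, htdef]
    try ring
  refine ⟨hslit, ?_, ?_⟩
  · rw [hvx, hsqrt, ← hρdef, ht2]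
    exact ineq_low M t cc hM ht0 ht1 hcc0 hcc1
  · rw [hvx, hsqrt, ← hρdef, ← htdef]
    exact ineq_high M t cc hM ht0 ht1 hcc0 hcc1

theorem statement_19 (ν : ℝ) (hν : 1/2 ≤ ν) :
    ∃ c : ℝ, 1 ≤ c ∧
    ∀ (R : ℝ) (Ω : Set (ℝ × ℝ)) (w : ℝ × ℝ) (M : ℝ) (u : ℝ × ℝ → ℝ),
      0 < R → IsOpen Ω → IsConnected Ω → w ∈ frontier Ω →
      -- Ω ∩ B(w,R) is contained in the image of S_ν under a rigid motion taking 0 to w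
      (∃ α : ℝ, Ω ∩ eballAt w R ⊆ rigidMotion w α '' Sector ν) →
      0 ≤ M →
      ContDiffOn ℝ 2 u Ω →
      (∀ x ∈ Ω, 0 ≤ lap2 u x) →
      (∀ x ∈ Ω ∩ eballAt w R, u x ≤ M) →
      (∀ y ∈ frontier Ω ∩ eballAt w R,
        ∀ ε : ℝ, 0 < ε → ∀ᶠ x in nhdsWithin y Ω, u x ≤ ε) →
      ∀ x ∈ Ω ∩ eballAt w R,
        u x ≤ c * M * (Real.sqrt ((x.1 - w.1)^2 + (x.2 - w.2)^2) / R) ^ ν := by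
  have hν0 : (0:ℝ) < ν := by linarith
  refine ⟨3, by norm_num, ?_⟩
  intro R Ω w M u hR hΩo hΩc hwf hsecE hM hu hlap hub hbdy
  obtain ⟨α, hsec⟩ := hsecE
  have keyU : ∀ x ∈ Ω ∩ eballAt w R,
      (Complex.exp (-(α:ℂ) * Complex.I) * ((x.1 + x.2*Complex.I) - ((w.1:ℂ) + w.2*Complex.I)) / R
        ∈ Complex.slitPlane)
      ∧ M * ((Real.sqrt ((x.1-w.1)^2+(x.2-w.2)^2)/R) ^ (2*ν)) ≤ reComp (fun z => (M:ℂ) *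
      (2 * (Complex.exp (-(α:ℂ)*Complex.I) * (z - ((w.1:ℂ) + w.2*Complex.I)) / R) ^ (ν:ℂ)
       - (Complex.exp (-(α:ℂ)*Complex.I) * (z - ((w.1:ℂ) + w.2*Complex.I)) / R) ^ ((2*ν:ℝ):ℂ))) x
      ∧ reComp (fun z => (M:ℂ) *
      (2 * (Complex.exp (-(α:ℂ)*Complex.I) * (z - ((w.1:ℂ) + w.2*Complex.I)) / R) ^ (ν:ℂ)
       - (Complex.exp (-(α:ℂ)*Complex.I) * (z - ((w.1:ℂ) + w.2*Complex.I)) / R) ^ ((2*ν:ℝ):ℂ))) x ≤ 3 * M * ((Real.sqrt ((x.1-w.1)^2+(x.2-w.2)^2)/R) ^ ν) :=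
    fun x hx => key_point ν R hν hR w α M hM x hx.2 (hsec hx)
  -- open sets
  have hζcont : Continuous (fun z : ℂ => Complex.exp (-(α:ℂ)*Complex.I) * (z - ((w.1:ℂ) + w.2*Complex.I)) / R) := by fun_prop
  have hWo : IsOpen ((fun z : ℂ => Complex.exp (-(α:ℂ)*Complex.I) * (z - ((w.1:ℂ) + w.2*Complex.I)) / R) ⁻¹' Complex.slitPlane) :=
    Complex.isOpen_slitPlane.preimage hζcont
  have hHd : DifferentiableOn ℂ (fun z => (M:ℂ) *
      (2 * (Complex.exp (-(α:ℂ)*Complex.I) * (z - ((w.1:ℂ) + w.2*Complex.I)) / R) ^ (ν:ℂ)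
       - (Complex.exp (-(α:ℂ)*Complex.I) * (z - ((w.1:ℂ) + w.2*Complex.I)) / R) ^ ((2*ν:ℝ):ℂ))) ((fun z : ℂ => Complex.exp (-(α:ℂ)*Complex.I) * (z - ((w.1:ℂ) + w.2*Complex.I)) / R) ⁻¹' Complex.slitPlane) := by
    intro z hz
    have hζd : DifferentiableAt ℂ (fun z : ℂ => Complex.exp (-(α:ℂ)*Complex.I) * (z - ((w.1:ℂ) + w.2*Complex.I)) / R) z := by fun_prop
    have h1 : DifferentiableAt ℂ (fun z : ℂ => (Complex.exp (-(α:ℂ)*Complex.I) * (z - ((w.1:ℂ) + w.2*Complex.I)) / R) ^ (ν:ℂ)) z :=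
      hζd.cpow (differentiableAt_const _) hz
    have h2 : DifferentiableAt ℂ (fun z : ℂ => (Complex.exp (-(α:ℂ)*Complex.I) * (z - ((w.1:ℂ) + w.2*Complex.I)) / R) ^ ((2*ν:ℝ):ℂ)) z :=
      hζd.cpow (differentiableAt_const _) hz
    exact (((h1.const_mul 2).sub h2).const_mul (M:ℂ)).differentiableWithinAt
  have hUsub : Ω ∩ eballAt w R ⊆
      {z : ℝ × ℝ | (z.1 + z.2 * Complex.I : ℂ) ∈ (fun z : ℂ => Complex.exp (-(α:ℂ)*Complex.I) * (z - ((w.1:ℂ) + w.2*Complex.I)) / R) ⁻¹' Complex.slitPlane} :=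
    fun x hx => (keyU x hx).1
  have hvsm : ContDiffOn ℝ 2 (reComp (fun z => (M:ℂ) *
      (2 * (Complex.exp (-(α:ℂ)*Complex.I) * (z - ((w.1:ℂ) + w.2*Complex.I)) / R) ^ (ν:ℂ)
       - (Complex.exp (-(α:ℂ)*Complex.I) * (z - ((w.1:ℂ) + w.2*Complex.I)) / R) ^ ((2*ν:ℝ):ℂ)))) (Ω ∩ eballAt w R) :=
    (reComp_contDiffOn (fun z => (M:ℂ) *
      (2 * (Complex.exp (-(α:ℂ)*Complex.I) * (z - ((w.1:ℂ) + w.2*Complex.I)) / R) ^ (ν:ℂ)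
       - (Complex.exp (-(α:ℂ)*Complex.I) * (z - ((w.1:ℂ) + w.2*Complex.I)) / R) ^ ((2*ν:ℝ):ℂ))) ((fun z : ℂ => Complex.exp (-(α:ℂ)*Complex.I) * (z - ((w.1:ℂ) + w.2*Complex.I)) / R) ⁻¹' Complex.slitPlane) hWo hHd).mono hUsub
  have hballo : IsOpen (eballAt w R) := by
    have he : eballAt w R
        = (fun x : ℝ × ℝ => (x.1-w.1)^2+(x.2-w.2)^2) ⁻¹' (Iio (R^2)) := rfl
    rw [he]
    exact isOpen_Iio.preimage (by fun_prop)
  have hUo : IsOpen (Ω ∩ eballAt w R) := hΩo.inter hballo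
  have hUb : Bornology.IsBounded (Ω ∩ eballAt w R) := by
    apply (Metric.isBounded_closedBall (x := w) (r := R)).subset
    intro x hx
    have hb : (x.1-w.1)^2 + (x.2-w.2)^2 < R^2 := hx.2
    have h1 : |x.1-w.1| ≤ R := by nlinarith [sq_abs (x.1-w.1), abs_nonneg (x.1-w.1), sq_nonneg (x.2-w.2)]
    have h2 : |x.2-w.2| ≤ R := by nlinarith [sq_abs (x.2-w.2), abs_nonneg (x.2-w.2), sq_nonneg (x.1-w.1)]
    rw [Metric.mem_closedBall, Prod.dist_eq]
    simp only [Real.dist_eq]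
    exact max_le h1 h2
  have husm : ContDiffOn ℝ 2 u (Ω ∩ eballAt w R) := hu.mono inter_subset_left
  have hsm : ContDiffOn ℝ 2 (fun z => u z - reComp (fun z => (M:ℂ) *
      (2 * (Complex.exp (-(α:ℂ)*Complex.I) * (z - ((w.1:ℂ) + w.2*Complex.I)) / R) ^ (ν:ℂ)
       - (Complex.exp (-(α:ℂ)*Complex.I) * (z - ((w.1:ℂ) + w.2*Complex.I)) / R) ^ ((2*ν:ℝ):ℂ))) z) (Ω ∩ eballAt w R) := husm.sub hvsm
  have hvnn : ∀ x ∈ Ω ∩ eballAt w R, 0 ≤ reComp (fun z => (M:ℂ) *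
      (2 * (Complex.exp (-(α:ℂ)*Complex.I) * (z - ((w.1:ℂ) + w.2*Complex.I)) / R) ^ (ν:ℂ)
       - (Complex.exp (-(α:ℂ)*Complex.I) * (z - ((w.1:ℂ) + w.2*Complex.I)) / R) ^ ((2*ν:ℝ):ℂ))) x := by
    intro x hx
    have h2 := (keyU x hx).2.1
    have h3 : 0 ≤ M * ((Real.sqrt ((x.1-w.1)^2+(x.2-w.2)^2)/R) ^ (2*ν)) :=
      mul_nonneg hM (Real.rpow_nonneg (by positivity) _)
    linarith
  have hsub : ∀ x ∈ Ω ∩ eballAt w R, 0 ≤ lap2 (fun z => u z - reComp (fun z => (M:ℂ) *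
      (2 * (Complex.exp (-(α:ℂ)*Complex.I) * (z - ((w.1:ℂ) + w.2*Complex.I)) / R) ^ (ν:ℂ)
       - (Complex.exp (-(α:ℂ)*Complex.I) * (z - ((w.1:ℂ) + w.2*Complex.I)) / R) ^ ((2*ν:ℝ):ℂ))) z) x := by
    intro x hx
    rw [lap2_sub (Ω ∩ eballAt w R) hUo u (reComp (fun z => (M:ℂ) *
      (2 * (Complex.exp (-(α:ℂ)*Complex.I) * (z - ((w.1:ℂ) + w.2*Complex.I)) / R) ^ (ν:ℂ)
       - (Complex.exp (-(α:ℂ)*Complex.I) * (z - ((w.1:ℂ) + w.2*Complex.I)) / R) ^ ((2*ν:ℝ):ℂ)))) husm hvsm x hx]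
    have hz : lap2 (reComp (fun z => (M:ℂ) *
      (2 * (Complex.exp (-(α:ℂ)*Complex.I) * (z - ((w.1:ℂ) + w.2*Complex.I)) / R) ^ (ν:ℂ)
       - (Complex.exp (-(α:ℂ)*Complex.I) * (z - ((w.1:ℂ) + w.2*Complex.I)) / R) ^ ((2*ν:ℝ):ℂ)))) x =
        0 := lap2_reComp_eq_zero (fun z => (M:ℂ) *
      (2 * (Complex.exp (-(α:ℂ)*Complex.I) * (z - ((w.1:ℂ) + w.2*Complex.I)) / R) ^ (ν:ℂ)
       - (Complex.exp (-(α:ℂ)*Complex.I) * (z - ((w.1:ℂ) + w.2*Complex.I)) / R) ^ ((2*ν:ℝ):ℂ))) ((fun z : ℂ => Complex.exp (-(α:ℂ)*Complex.I) * (z - ((w.1:ℂ) + w.2*Complex.I)) / R) ⁻¹' Complex.slitPlane) hWo hHd x (hUsub hx)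
    rw [hz]
    have := hlap x hx.1
    linarith
  have hbdd : BddAbove ((fun z => u z - reComp (fun z => (M:ℂ) *
      (2 * (Complex.exp (-(α:ℂ)*Complex.I) * (z - ((w.1:ℂ) + w.2*Complex.I)) / R) ^ (ν:ℂ)
       - (Complex.exp (-(α:ℂ)*Complex.I) * (z - ((w.1:ℂ) + w.2*Complex.I)) / R) ^ ((2*ν:ℝ):ℂ))) z) '' (Ω ∩ eballAt w R)) := by
    refine ⟨M, ?_⟩
    rintro _ ⟨x, hx, rfl⟩
    have h1 := hub x hx
    have h2 := hvnn x hx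
    beta_reduce
    linarith
  have hbound : ∀ y ∈ frontier (Ω ∩ eballAt w R), ∀ ε : ℝ, 0 < ε →
      ∀ᶠ x in nhdsWithin y (Ω ∩ eballAt w R), (fun z => u z - reComp (fun z => (M:ℂ) *
      (2 * (Complex.exp (-(α:ℂ)*Complex.I) * (z - ((w.1:ℂ) + w.2*Complex.I)) / R) ^ (ν:ℂ)
       - (Complex.exp (-(α:ℂ)*Complex.I) * (z - ((w.1:ℂ) + w.2*Complex.I)) / R) ^ ((2*ν:ℝ):ℂ))) z) x ≤ 0 + ε := by
    intro y hy ε hε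
    have hyc : y ∈ closure (Ω ∩ eballAt w R) := frontier_subset_closure hy
    have hynU : y ∉ Ω ∩ eballAt w R := by
      rw [hUo.frontier_eq] at hy
      exact hy.2
    by_cases hyB : y ∈ eballAt w R
    · have hyΩ : y ∉ Ω := fun h => hynU ⟨h, hyB⟩
      have hyfΩ : y ∈ frontier Ω := by
        rw [frontier_eq_closure_inter_closure]
        exact ⟨closure_mono inter_subset_left hyc, subset_closure hyΩ⟩
      have hev := hbdy y ⟨hyfΩ, hyB⟩ ε hε
      have hmono : nhdsWithin y (Ω ∩ eballAt w R) ≤ nhdsWithin y Ω :=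
        nhdsWithin_mono y inter_subset_left
      filter_upwards [hmono hev, self_mem_nhdsWithin] with x hxε hxU
      have h2 := hvnn x hxU
      beta_reduce
      linarith
    · have hyR : (y.1-w.1)^2 + (y.2-w.2)^2 = R^2 := by
        have hle : (y.1-w.1)^2+(y.2-w.2)^2 ≤ R^2 := by
          have hsubc : closure (Ω ∩ eballAt w R)
              ⊆ {z : ℝ × ℝ | (z.1-w.1)^2+(z.2-w.2)^2 ≤ R^2} := by
            apply closure_minimal
            · intro z hz
              have hlt : (z.1-w.1)^2+(z.2-w.2)^2 < R^2 := hz.2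
              exact le_of_lt hlt
            · exact isClosed_le (by fun_prop) continuous_const
          exact hsubc hyc
        have hge : ¬ ((y.1-w.1)^2+(y.2-w.2)^2 < R^2) := hyB
        push_neg at hge
        linarith
      have hρy : Real.sqrt ((y.1-w.1)^2+(y.2-w.2)^2)/R = 1 := by
        rw [hyR, Real.sqrt_sq hR.le, div_self hR.ne']
      have hΦc : ContinuousAt (fun z : ℝ × ℝ => M * ((Real.sqrt ((z.1-w.1)^2+(z.2-w.2)^2)/R) ^ (2*ν))) y := by
        apply ContinuousAt.mul continuousAt_const
        have hg : ContinuousAt (fun z : ℝ × ℝ => Real.sqrt ((z.1-w.1)^2+(z.2-w.2)^2)/R) y := by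
          fun_prop
        exact hg.rpow_const (Or.inl (by rw [hρy]; norm_num))
      have hΦev : ∀ᶠ z in nhds y, M - ε < M * ((Real.sqrt ((z.1-w.1)^2+(z.2-w.2)^2)/R) ^ (2*ν)) := by
        have ht := hΦc.tendsto
        have hval : M * ((Real.sqrt ((y.1-w.1)^2+(y.2-w.2)^2)/R) ^ (2*ν)) = M := by
          rw [hρy, Real.one_rpow, mul_one]
        rw [hval] at ht
        exact ht.eventually (eventually_gt_nhds (by linarith))
      filter_upwards [nhdsWithin_le_nhds hΦev, self_mem_nhdsWithin] with x h1 h2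
      have hlow := (keyU x h2).2.1
      have hup := hub x h2
      beta_reduce
      linarith
  have hmp := maxPrinciple (Ω ∩ eballAt w R) hUo hUb (fun z => u z - reComp (fun z => (M:ℂ) *
      (2 * (Complex.exp (-(α:ℂ)*Complex.I) * (z - ((w.1:ℂ) + w.2*Complex.I)) / R) ^ (ν:ℂ)
       - (Complex.exp (-(α:ℂ)*Complex.I) * (z - ((w.1:ℂ) + w.2*Complex.I)) / R) ^ ((2*ν:ℝ):ℂ))) z) hsm hsub hbdd 0 hbound
  intro x hx
  have h1 := hmp x hx
  have h2 := (keyU x hx).2.2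
  linarith
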